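/- Combining the uniform smoothing bound with Nesterov's convergence guarantee yields: if f_μ(v_k) − f_μ(x̂_μ) ≤ (2 L̂ ‖x̂_μ − x₀‖² ) / ((k+1)(k+2)) with L̂ = L + D‖B‖_op²/δ, μ = δ/D, and f_μ ≤ f ≤ f_μ + (μ/2)D pointwise on the feasible set, then f(v_k) − f(x̂) ≤ δ for all k ≥ k_δ := (2/δ)·‖x̂_μ − x₀‖·sqrt(Lδ + D‖B‖_op²), where x̂ minimizes f and x̂_μ minimizes f_μ over the same convex set Q₁. -/
import Mathlib


/-- Combining the uniform smoothing bound with Nesterov's convergence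
guarantee yields accuracy δ after k_δ iterations. -/
theorem smoothing_plus_nesterov_accuracy
    {E : Type*} [NormedAddCommGroup E] [InnerProductSpace ℝ E]
    (Q₁ : Set E) (hQconv : Convex ℝ Q₁)
    (f fμ : E → ℝ) (D δ L Bop μ : ℝ)
    (hD : 0 < D) (hδ : 0 < δ) (hL : 0 ≤ L) (hB : 0 ≤ Bop)
    (hμ : μ = δ / D)
    (hsandwich : ∀ x ∈ Q₁, fμ x ≤ f x ∧ f x ≤ fμ x + (μ / 2) * D)
    (xhat xhatμ x₀ : E)
    (hxhat : xhat ∈ Q₁) (hxhatμ : xhatμ ∈ Q₁)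
    (hmin : ∀ x ∈ Q₁, f xhat ≤ f x)
    (hminμ : ∀ x ∈ Q₁, fμ xhatμ ≤ fμ x)
    (v : ℕ → E) (hv : ∀ k, v k ∈ Q₁)
    (hrate : ∀ k : ℕ, fμ (v k) - fμ xhatμ ≤
      2 * (L + D * Bop ^ 2 / δ) * ‖xhatμ - x₀‖ ^ 2 / ((k + 1) * (k + 2))) :
    ∀ k : ℕ, (2 / δ) * ‖xhatμ - x₀‖ * Real.sqrt (L * δ + D * Bop ^ 2) ≤ k →
      f (v k) - f xhat ≤ δ := by
  intro k hk
  set R := ‖xhatμ - x₀‖ with hRdef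
  have hR : 0 ≤ R := norm_nonneg _
  have hSsq : Real.sqrt (L * δ + D * Bop ^ 2) ^ 2 = L * δ + D * Bop ^ 2 :=
    Real.sq_sqrt (by positivity)
  set S := Real.sqrt (L * δ + D * Bop ^ 2) with hSdef
  have hS0 : 0 ≤ S := Real.sqrt_nonneg _
  have hμD : μ / 2 * D = δ / 2 := by rw [hμ]; field_simp
  have h1 : f (v k) ≤ fμ (v k) + δ / 2 := by
    have := (hsandwich _ (hv k)).2; linarith [hμD]
  have h2 : fμ xhatμ ≤ f xhat :=
    le_trans (hminμ _ hxhat) (hsandwich _ hxhat).1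
  have hk0 : (0 : ℝ) ≤ (k : ℝ) := Nat.cast_nonneg k
  have hden : (0 : ℝ) < ((k : ℝ) + 1) * ((k : ℝ) + 2) := by positivity
  have hkk : (2 / δ * R * S) * (2 / δ * R * S) ≤ (k : ℝ) * (k : ℝ) :=
    mul_self_le_mul_self (by positivity) hk
  have hkey : 2 * (L + D * Bop ^ 2 / δ) * R ^ 2 / (((k : ℝ) + 1) * ((k : ℝ) + 2)) ≤ δ / 2 := by
    rw [div_le_iff₀ hden]
    have hLhat : L + D * Bop ^ 2 / δ = S ^ 2 / δ := by
      rw [hSsq]; field_simp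
    rw [hLhat]
    have h2RS : 2 * R * S ≤ δ * (k : ℝ) := by
      have h := mul_le_mul_of_nonneg_left hk hδ.le
      field_simp at h
      linarith
    have h4 := mul_self_le_mul_self (by positivity : (0:ℝ) ≤ 2 * R * S) h2RS
    calc 2 * (S ^ 2 / δ) * R ^ 2 = (4 * R ^ 2 * S ^ 2) / (2 * δ) := by
          field_simp; ring
      _ ≤ (δ ^ 2 * (((k:ℝ) + 1) * ((k:ℝ) + 2))) / (2 * δ) := by
          have hnum : 4 * R ^ 2 * S ^ 2 ≤ δ ^ 2 * (((k:ℝ) + 1) * ((k:ℝ) + 2)) := by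
            nlinarith
          exact div_le_div_of_nonneg_right hnum (by positivity)
      _ = δ / 2 * (((k:ℝ) + 1) * ((k:ℝ) + 2)) := by
          field_simp
  have hr := hrate k
  linarith
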